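/- arXiv:1702.00353 — 4 statements merged into one kernel-verified Lean document; each statement's English description precedes it below -/
import Mathlib

section
/- Let P = P₀P₁…P_{n−1} (n ≥ 2) be a finite path in ℤ² (injective, consecutive points adjacent). Then the canonical embedding 𝔈_P : [0,1] → ℝ² is injective. -/
/-- The standard inclusion ℤ² → ℝ². -/
def toR2 (p : ℤ × ℤ) : ℝ × ℝ := ((p.1 : ℝ), (p.2 : ℝ))

/-- Canonical embedding of a path `P₀ … P_{n-1}` in ℝ²:
piecewise-linear interpolation through the points, parametrized over [0,1]. -/
noncomputable def embed (n : ℕ) (P : ℕ → ℤ × ℤ) (s : ℝ) : ℝ × ℝ :=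
  if s = 1 then toR2 (P (n - 1))
  else
    let t : ℝ := s * ((n : ℝ) - 1)
    let k : ℕ := ⌊t⌋.toNat
    toR2 (P k) + (t - (k : ℝ)) • (toR2 (P (k + 1)) - toR2 (P k))

/-!
Write `s (n - 1) = k + r` with `0 ≤ r < 1`, so that `embed n P s` lies on the unit edge from
`P k` to `P (k + 1)`. In the sup norm of `ℝ × ℝ`, the lattice points at distance `< 1` from that
point are `P k` and, if `r ≠ 0`, `P (k + 1)`. So if two parameters give the same point, each of
`P k₁`, `P k₂` is a near lattice point of the other edge; self-avoidance then forces `k₁ = k₂`,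
and `r₁ = r₂` because an edge has nonzero direction.
-/

theorem toR2_injective : Function.Injective toR2 := fun p q h => by
  simp only [toR2, Prod.mk.injEq, Int.cast_inj] at h
  exact Prod.ext h.1 h.2

theorem Int.eq_or_eq_of_abs_sub_lt_one {a b z : ℤ} {r : ℝ} (hab : |b - a| ≤ 1)
    (hr0 : 0 ≤ r) (hr1 : r < 1) (h : |(z : ℝ) - (a + r * (b - a))| < 1) :
    z = a ∨ (r ≠ 0 ∧ z = b) := by
  obtain ⟨h₁, h₂⟩ := abs_lt.mp h
  have hb : b = a - 1 ∨ b = a ∨ b = a + 1 := by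
    obtain ⟨_, _⟩ := abs_le.mp hab
    omega
  have hm₁ : ((-2 : ℤ) : ℝ) < ((z - a : ℤ) : ℝ) := by
    rcases hb with rfl | rfl | rfl <;> push_cast at h₁ ⊢ <;> linarith
  have hm₂ : ((z - a : ℤ) : ℝ) < ((2 : ℤ) : ℝ) := by
    rcases hb with rfl | rfl | rfl <;> push_cast at h₂ ⊢ <;> linarith
  have hz : z = a - 1 ∨ z = a ∨ z = a + 1 := by
    have := Int.cast_lt.mp hm₁
    have := Int.cast_lt.mp hm₂
    omega
  rcases hb with rfl | rfl | rfl <;> rcases hz with rfl | rfl | rfl <;> push_cast at h₁ h₂ <;>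
    first | exact .inl rfl | exact .inr ⟨by rintro rfl; linarith, rfl⟩ | (exfalso; linarith)

def segmentPoint (a b : ℤ × ℤ) (r : ℝ) : ℝ × ℝ := toR2 a + r • (toR2 b - toR2 a)

@[simp]
theorem segmentPoint_zero (a b : ℤ × ℤ) : segmentPoint a b 0 = toR2 a := by
  simp [segmentPoint]

section Segment

variable {a b : ℤ × ℤ} {r : ℝ}

theorem norm_toR2_sub_le_one (hab : |b.1 - a.1| + |b.2 - a.2| ≤ 1) :
    ‖toR2 b - toR2 a‖ ≤ 1 := by
  have h₁ : |b.1 - a.1| ≤ 1 := by linarith [abs_nonneg (b.2 - a.2)]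
  have h₂ : |b.2 - a.2| ≤ 1 := by linarith [abs_nonneg (b.1 - a.1)]
  rw [norm_prod_le_iff]
  simp only [toR2, Prod.fst_sub, Prod.snd_sub, Real.norm_eq_abs]
  constructor <;> exact_mod_cast ‹_›

theorem norm_toR2_sub_segmentPoint_lt_one (hab : |b.1 - a.1| + |b.2 - a.2| ≤ 1)
    (hr0 : 0 ≤ r) (hr1 : r < 1) : ‖toR2 a - segmentPoint a b r‖ < 1 := by
  rw [segmentPoint, sub_add_cancel_left, norm_neg, norm_smul, Real.norm_of_nonneg hr0]
  calc r * ‖toR2 b - toR2 a‖ ≤ r * 1 := by gcongr; exact norm_toR2_sub_le_one hab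
    _ < 1 := by linarith

theorem eq_or_eq_of_norm_toR2_sub_segmentPoint_lt_one {z : ℤ × ℤ}
    (hab : |b.1 - a.1| + |b.2 - a.2| ≤ 1) (hr0 : 0 ≤ r) (hr1 : r < 1)
    (h : ‖toR2 z - segmentPoint a b r‖ < 1) : z = a ∨ (r ≠ 0 ∧ z = b) := by
  rw [Prod.norm_def, max_lt_iff] at h
  simp only [segmentPoint, toR2, Prod.fst_sub, Prod.snd_sub, Prod.fst_add, Prod.snd_add,
    Prod.smul_fst, Prod.smul_snd, smul_eq_mul, Real.norm_eq_abs] at h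
  have h₁ := Int.eq_or_eq_of_abs_sub_lt_one (by linarith [abs_nonneg (b.2 - a.2)]) hr0 hr1 h.1
  have h₂ := Int.eq_or_eq_of_abs_sub_lt_one (by linarith [abs_nonneg (b.1 - a.1)]) hr0 hr1 h.2
  have haxis : a.1 = b.1 ∨ a.2 = b.2 := by
    by_contra! hne
    have := Int.one_le_abs (sub_ne_zero.mpr hne.1.symm)
    have := Int.one_le_abs (sub_ne_zero.mpr hne.2.symm)
    linarith
  simp only [Prod.ext_iff]
  grind

end Segment

section Edges

variable {n : ℕ} {P : ℕ → ℤ × ℤ}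

theorem norm_toR2_sub_edge_lt_one
    (hadj : ∀ k, k + 1 < n → |(P (k + 1)).1 - (P k).1| + |(P (k + 1)).2 - (P k).2| = 1)
    {k : ℕ} {r : ℝ} (hr0 : 0 ≤ r) (hr1 : r < 1) (hk : r ≠ 0 → k + 1 < n) :
    ‖toR2 (P k) - segmentPoint (P k) (P (k + 1)) r‖ < 1 := by
  rcases eq_or_ne r 0 with rfl | hr
  · simp
  · exact norm_toR2_sub_segmentPoint_lt_one (hadj k (hk hr)).le hr0 hr1

theorem eq_or_eq_of_norm_toR2_sub_edge_lt_one
    (hadj : ∀ k, k + 1 < n → |(P (k + 1)).1 - (P k).1| + |(P (k + 1)).2 - (P k).2| = 1)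
    {k : ℕ} {r : ℝ} {z : ℤ × ℤ} (hr0 : 0 ≤ r) (hr1 : r < 1) (hk : r ≠ 0 → k + 1 < n)
    (h : ‖toR2 z - segmentPoint (P k) (P (k + 1)) r‖ < 1) :
    z = P k ∨ (r ≠ 0 ∧ z = P (k + 1)) := by
  rcases eq_or_ne r 0 with rfl | hr
  · have := eq_or_eq_of_norm_toR2_sub_segmentPoint_lt_one (a := P k) (b := P k) (by simp)
      le_rfl one_pos (by simpa using h)
    simpa using this
  · exact eq_or_eq_of_norm_toR2_sub_segmentPoint_lt_one (hadj k (hk hr)).le hr0 hr1 h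

theorem edge_segmentPoint_inj (hinj : ∀ a < n, ∀ b < n, P a = P b → a = b)
    (hadj : ∀ k, k + 1 < n → |(P (k + 1)).1 - (P k).1| + |(P (k + 1)).2 - (P k).2| = 1)
    {k₁ k₂ : ℕ} {r₁ r₂ : ℝ} (hk₁ : k₁ < n) (hk₂ : k₂ < n)
    (hr₁0 : 0 ≤ r₁) (hr₁1 : r₁ < 1) (hr₂0 : 0 ≤ r₂) (hr₂1 : r₂ < 1)
    (hk₁r : r₁ ≠ 0 → k₁ + 1 < n) (hk₂r : r₂ ≠ 0 → k₂ + 1 < n)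
    (h : segmentPoint (P k₁) (P (k₁ + 1)) r₁ = segmentPoint (P k₂) (P (k₂ + 1)) r₂) :
    k₁ = k₂ ∧ r₁ = r₂ := by
  have near₁ := eq_or_eq_of_norm_toR2_sub_edge_lt_one hadj hr₂0 hr₂1 hk₂r
    (h ▸ norm_toR2_sub_edge_lt_one hadj hr₁0 hr₁1 hk₁r)
  have near₂ := eq_or_eq_of_norm_toR2_sub_edge_lt_one hadj hr₁0 hr₁1 hk₁r
    (h.symm ▸ norm_toR2_sub_edge_lt_one hadj hr₂0 hr₂1 hk₂r)
  obtain rfl : k₁ = k₂ := by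
    rcases near₁ with h₁ | ⟨hr₂, h₁⟩
    · exact hinj _ hk₁ _ hk₂ h₁
    have := hinj _ hk₁ _ (hk₂r hr₂) h₁
    rcases near₂ with h₂ | ⟨hr₁, h₂⟩
    · have := hinj _ hk₂ _ hk₁ h₂
      omega
    · have := hinj _ hk₂ _ (hk₁r hr₁) h₂
      omega
  refine ⟨rfl, ?_⟩
  by_cases hr : r₁ = 0 ∧ r₂ = 0
  · rw [hr.1, hr.2]
  have hk : k₁ + 1 < n := by
    rcases not_and_or.mp hr with hr | hr
    exacts [hk₁r hr, hk₂r hr]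
  have hv : toR2 (P (k₁ + 1)) - toR2 (P k₁) ≠ 0 := by
    refine sub_ne_zero.mpr (toR2_injective.ne fun hP => ?_)
    have := hinj _ hk _ hk₁ hP
    omega
  exact smul_left_injective ℝ hv (add_left_cancel h)

end Edges

theorem embed_eq_segmentPoint {n : ℕ} (P : ℕ → ℤ × ℤ) (hn : 2 ≤ n) {s : ℝ}
    (hs : s ∈ Set.Icc 0 1) :
    ∃ (k : ℕ) (r : ℝ), k < n ∧ 0 ≤ r ∧ r < 1 ∧ (r ≠ 0 → k + 1 < n) ∧
      (k : ℝ) + r = s * ((n : ℝ) - 1) ∧ embed n P s = segmentPoint (P k) (P (k + 1)) r := by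
  rcases eq_or_ne s 1 with rfl | hs1
  -- the endpoint is the degenerate edge from `P (n - 1)` to the junk point `P n`
  · refine ⟨n - 1, 0, by omega, le_rfl, one_pos, fun h => absurd rfl h, ?_, by simp [embed]⟩
    rw [Nat.cast_sub (by omega)]
    simp
  have hn' : (2 : ℝ) ≤ n := by exact_mod_cast hn
  set t := s * ((n : ℝ) - 1) with ht
  have ht0 : 0 ≤ t := mul_nonneg hs.1 (by linarith)
  have htn : t < (n : ℝ) - 1 := by nlinarith [lt_of_le_of_ne hs.2 hs1]
  have hk : ((⌊t⌋.toNat : ℕ) : ℝ) = ⌊t⌋ := by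
    exact_mod_cast Int.toNat_of_nonneg (Int.floor_nonneg.mpr ht0)
  have hkn : ⌊t⌋.toNat + 1 < n := by
    have : ⌊t⌋ < (n : ℤ) - 1 := Int.floor_lt.mpr (by push_cast; exact htn)
    omega
  refine ⟨⌊t⌋.toNat, t - ⌊t⌋.toNat, by omega, ?_, ?_, fun _ => hkn, by ring,
    by simp [embed, hs1, segmentPoint, ← ht]⟩
  · rw [hk]; linarith [Int.floor_le t]
  · rw [hk]; linarith [Int.lt_floor_add_one t]

/-- The canonical embedding of a finite self-avoiding path in ℤ² (n ≥ 2) is injective: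
self-avoidance of the discrete path implies the interpolating polygonal curve is simple. -/
theorem embed_injective (n : ℕ) (P : ℕ → ℤ × ℤ) (hn : 2 ≤ n)
    (hinj : ∀ a < n, ∀ b < n, P a = P b → a = b)
    (hadj : ∀ k, k + 1 < n →
      |(P (k + 1)).1 - (P k).1| + |(P (k + 1)).2 - (P k).2| = 1) :
    Set.InjOn (embed n P) (Set.Icc 0 1) := by
  intro s₁ hs₁ s₂ hs₂ h
  obtain ⟨k₁, r₁, hk₁, hr₁0, hr₁1, hk₁r, ht₁, he₁⟩ := embed_eq_segmentPoint P hn hs₁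
  obtain ⟨k₂, r₂, hk₂, hr₂0, hr₂1, hk₂r, ht₂, he₂⟩ := embed_eq_segmentPoint P hn hs₂
  obtain ⟨rfl, rfl⟩ := edge_segmentPoint_inj hinj hadj hk₁ hk₂ hr₁0 hr₁1 hr₂0 hr₂1 hk₁r hk₂r
    (he₁ ▸ he₂ ▸ h)
  have hn' : (2 : ℝ) ≤ n := by exact_mod_cast hn
  exact mul_right_cancel₀ (by linarith : (n : ℝ) - 1 ≠ 0) (ht₁.symm.trans ht₂)
end

section
/- Let 𝒯 = (T, σ, 1) be a temperature-1 tile assembly system and let α be a producible assembly of 𝒯. Then for every tile ((x,y), t) in α, there exists a producible path P of 𝒯 and an index i such that P_i = ((x,y), t). (In particular, every tile of a producible assembly at temperature 1 lies on some producible path starting from the seed.) -/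
/-!
Induct along the assembly sequence of `α`, keeping every tile on a producible path that stays
inside the current assembly. A newly attached tile binds, at temperature 1, to a single tile `(q, s)`
already present; cut the path to `(q, s)` just after `(q, s)` and append the new tile. Since the
path lies inside the old assembly, the new position is free of earlier path tiles and of the seed,
so the extended path is injective and its last step is a legal attachment.
-/

/-- A tile type: four sides, each carrying a glue type from `G`. -/
structure TileType (G : Type) where
  north : G
  south : G
  east : G
  west : G

/-- An assembly: a partial placement of tile types on ℤ². -/
abbrev Assembly (G : Type) := ℤ × ℤ → Option (TileType G)

/-- A (temperature-1) tile assembly system: a tile set, glue strengths, and a seed. -/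
structure TAS (G : Type) where
  tiles : Set (TileType G)
  strength : G → ℕ
  seed : Assembly G

/-- Two tile types interact when placed at relative displacement `d`
(`d` = position of the second minus position of the first): their abutting glue
types are equal and have strength ≥ 1. -/
def interacts {G : Type} (str : G → ℕ) (t t' : TileType G) (d : ℤ × ℤ) : Prop :=
  (d = (1, 0) ∧ t.east = t'.west ∧ 1 ≤ str t.east) ∨
  (d = (-1, 0) ∧ t.west = t'.east ∧ 1 ≤ str t.west) ∨
  (d = (0, 1) ∧ t.north = t'.south ∧ 1 ≤ str t.north) ∨
  (d = (0, -1) ∧ t.south = t'.north ∧ 1 ≤ str t.south)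

/-- Producible assemblies of a temperature-1 system: obtained from the seed by
repeatedly attaching single tiles that bind with strength ≥ 1. -/
inductive Producible {G : Type} (sys : TAS G) : Assembly G → Prop
  | seed : Producible sys sys.seed
  | step (α : Assembly G) (p : ℤ × ℤ) (t : TileType G) :
      Producible sys α → t ∈ sys.tiles → α p = none →
      (∃ q t', α q = some t' ∧ interacts sys.strength t' t (p - q)) →
      Producible sys (Function.update α p (some t))

/-- The assembly obtained from `σ` by placing the first `k` tiles of the sequence `P`. -/
def addPath {G : Type} (σ : Assembly G) (P : ℕ → (ℤ × ℤ) × TileType G) : ℕ → Assembly G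
  | 0 => σ
  | k + 1 => Function.update (addPath σ P k) (P k).1 (some (P k).2)

/-- `P` (of length `n`) is a path: positions are pairwise distinct and each
consecutive pair of tiles interacts. -/
def IsPath {G : Type} (sys : TAS G) (n : ℕ) (P : ℕ → (ℤ × ℤ) × TileType G) : Prop :=
  (∀ a < n, ∀ b < n, (P a).1 = (P b).1 → a = b) ∧
  (∀ k, k + 1 < n → interacts sys.strength (P k).2 (P (k + 1)).2 ((P (k + 1)).1 - (P k).1))

/-- A producible path: a path that grows tile-by-tile in path order from the seed,
every intermediate assembly being producible. -/
def ProduciblePath {G : Type} (sys : TAS G) (n : ℕ) (P : ℕ → (ℤ × ℤ) × TileType G) : Prop :=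
  IsPath sys n P ∧ ∀ k ≤ n, Producible sys (addPath sys.seed P k)

theorem ne_of_eq_some_of_eq_none {α β : Type*} {f : α → Option β} {a b : α} {x : β}
    (ha : f a = some x) (hb : f b = none) : a ≠ b :=
  fun h => by simp [h, hb] at ha

theorem Producible.seed_subset {G : Type} {sys : TAS G} {α : Assembly G}
    (hα : Producible sys α) {q : ℤ × ℤ} {s : TileType G} (hs : sys.seed q = some s) :
    α q = some s := by
  induction hα with
  | seed => exact hs
  | step β p t _ _ hp _ ih => rwa [Function.update_of_ne (ne_of_eq_some_of_eq_none ih hp)]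

section addPath

variable {G : Type} (σ : Assembly G) (P : ℕ → (ℤ × ℤ) × TileType G)

theorem addPath_congr {Q : ℕ → (ℤ × ℤ) × TileType G} {k : ℕ} (h : ∀ j < k, P j = Q j) :
    addPath σ P k = addPath σ Q k := by
  induction k with
  | zero => rfl
  | succ m ih => simp only [addPath, ih fun j hj => h j (by omega), h m (by omega)]

theorem addPath_update_of_le {m k : ℕ} (x : (ℤ × ℤ) × TileType G) (hk : k ≤ m) :
    addPath σ (Function.update P m x) k = addPath σ P k :=
  addPath_congr σ _ fun j hj => Function.update_of_ne (by omega) _ _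

theorem addPath_apply_of_forall_ne {k : ℕ} {p : ℤ × ℤ} (h : ∀ j < k, (P j).1 ≠ p) :
    addPath σ P k p = σ p := by
  induction k with
  | zero => rfl
  | succ m ih =>
    rw [addPath, Function.update_of_ne (h m (by omega)).symm, ih fun j hj => h j (by omega)]

theorem addPath_succ_apply_self (k : ℕ) : addPath σ P (k + 1) (P k).1 = some (P k).2 :=
  Function.update_self _ _ _

end addPath

namespace ProduciblePath

variable {G : Type} {sys : TAS G} {P : ℕ → (ℤ × ℤ) × TileType G}

theorem of_le {m n : ℕ} (hP : ProduciblePath sys n P) (hm : m ≤ n) : ProduciblePath sys m P :=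
  ⟨⟨fun a ha b hb => hP.1.1 a (by omega) b (by omega), fun k hk => hP.1.2 k (by omega)⟩,
    fun k hk => hP.2 k (by omega)⟩

theorem single {p : ℤ × ℤ} {t : TileType G} (hs : sys.seed p = some t) :
    ProduciblePath sys 1 fun _ => (p, t) := by
  refine ⟨⟨fun a ha b hb _ => by omega, fun k hk => by omega⟩, fun k hk => ?_⟩
  obtain rfl | rfl : k = 0 ∨ k = 1 := by omega
  · exact .seed
  · rw [addPath, addPath, Function.update_eq_self_iff.mpr hs.symm]
    exact .seed

theorem snoc {i : ℕ} {p : ℤ × ℤ} {t : TileType G} (hP : ProduciblePath sys (i + 1) P)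
    (ht : t ∈ sys.tiles) (hseed : sys.seed p = none) (hne : ∀ j ≤ i, (P j).1 ≠ p)
    (hint : interacts sys.strength (P i).2 t (p - (P i).1)) :
    ProduciblePath sys (i + 2) (Function.update P (i + 1) (p, t)) := by
  set Q := Function.update P (i + 1) (p, t)
  have hQ : ∀ j ≤ i, Q j = P j := fun j hj => Function.update_of_ne (by omega) _ _
  have hQlast : Q (i + 1) = (p, t) := Function.update_self _ _ _
  refine ⟨⟨fun a ha b hb hab => ?_, fun k hk => ?_⟩, fun k hk => ?_⟩
  · obtain ha | rfl : a ≤ i ∨ a = i + 1 := by omega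
    all_goals obtain hb | rfl : b ≤ i ∨ b = i + 1 := by omega
    · rw [hQ a ha, hQ b hb] at hab
      exact hP.1.1 a (by omega) b (by omega) hab
    · rw [hQ a ha, hQlast] at hab
      exact absurd hab (hne a ha)
    · rw [hQ b hb, hQlast] at hab
      exact absurd hab.symm (hne b hb)
    · rfl
  · obtain hk | rfl : k + 1 ≤ i ∨ k = i := by omega
    · rw [hQ k (by omega), hQ (k + 1) hk]
      exact hP.1.2 k (by omega)
    · rwa [hQ k le_rfl, hQlast]
  · obtain hk | rfl : k ≤ i + 1 ∨ k = i + 2 := by omega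
    · rw [addPath_update_of_le _ _ _ hk]
      exact hP.2 k hk
    · rw [addPath, addPath_update_of_le _ _ _ le_rfl, hQlast]
      refine .step _ p t (hP.2 _ le_rfl) ht ?_ ⟨_, _, addPath_succ_apply_self _ P i, hint⟩
      rw [addPath_apply_of_forall_ne _ _ fun j hj => hne j (by omega), hseed]

end ProduciblePath

theorem Producible.exists_produciblePath_within {G : Type} {sys : TAS G} {α : Assembly G}
    (hα : Producible sys α) {p : ℤ × ℤ} {t : TileType G} (ht : α p = some t) :
    ∃ n P, ProduciblePath sys n P ∧ (∃ i < n, P i = (p, t)) ∧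
      ∀ k < n, α (P k).1 = some (P k).2 := by
  induction hα generalizing p t with
  | seed => exact ⟨1, _, .single ht, ⟨0, one_pos, rfl⟩, fun _ _ => ht⟩
  | step β pp tt hβ htile hnone hbind ih =>
    have hkeep : ∀ {q s}, β q = some s → Function.update β pp (some tt) q = some s :=
      fun hq => by rwa [Function.update_of_ne (ne_of_eq_some_of_eq_none hq hnone)]
    by_cases hp : p = pp
    · subst hp
      obtain rfl : tt = t := Option.some.inj (by rw [← ht, Function.update_self])
      obtain ⟨q, s, hq, hint⟩ := hbind
      obtain ⟨n, P, hP, ⟨i, hi, hPi⟩, hsub⟩ := ih hq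
      have hne : ∀ j < n, (P j).1 ≠ p := fun j hj => ne_of_eq_some_of_eq_none (hsub j hj) hnone
      have hseed : sys.seed p = none := by
        cases hs : sys.seed p with
        | none => rfl
        | some s => simp [hβ.seed_subset hs] at hnone
      refine ⟨i + 2, _, (hP.of_le hi).snoc htile hseed (fun j hj => hne j (by omega))
        (by rwa [hPi]), ⟨i + 1, by omega, Function.update_self _ _ _⟩, fun k hk => ?_⟩
      obtain hk | rfl : k ≤ i ∨ k = i + 1 := by omega
      · rw [Function.update_of_ne (show k ≠ i + 1 by omega) _ P]
        exact hkeep (hsub k (by omega))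
      · simp
    · obtain ⟨n, P, hP, hi, hsub⟩ := ih (by rwa [Function.update_of_ne hp] at ht)
      exact ⟨n, P, hP, hi, fun k hk => hkeep (hsub k hk)⟩

/-- At temperature 1, every tile of a producible assembly lies on some
producible path starting from the seed. -/
theorem tile_on_producible_path {G : Type} (sys : TAS G) (α : Assembly G)
    (hα : Producible sys α) (p : ℤ × ℤ) (t : TileType G) (ht : α p = some t) :
    ∃ (n : ℕ) (P : ℕ → (ℤ × ℤ) × TileType G),
      ProduciblePath sys n P ∧ ∃ i < n, P i = (p, t) := by
  obtain ⟨n, P, hP, hi, -⟩ := hα.exists_produciblePath_within ht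
  exact ⟨n, P, hP, hi⟩
end

section
/- Let P be a finite path in ℤ² of horizontal extent at least W, i.e., max_k x(P_k) − min_k x(P_k) ≥ W, where P starts at its leftmost column and ends at its rightmost column. Then P has at least W visible glues (glues visible from the south): for every half-integer x-coordinate c with min_k x(P_k) < c < max_k x(P_k) and c ∉ ℤ, there is exactly one visible glue of P whose midpoint has x-coordinate c. -/
/-- The midpoint in ℝ² of positions `P i` and `P (i+1)`: the position of the glue
between consecutive tiles of the path. -/
noncomputable def mid (P : ℕ → ℤ × ℤ) (i : ℕ) : ℝ × ℝ :=
  ((((P i).1 + (P (i + 1)).1 : ℤ) : ℝ) / 2, (((P i).2 + (P (i + 1)).2 : ℤ) : ℝ) / 2)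

/-- The glue at index `i` of a path of length `n` is visible from the south:
the downward vertical ray from its midpoint contains no other glue midpoint of `P`. -/
def Visible (n : ℕ) (P : ℕ → ℤ × ℤ) (i : ℕ) : Prop :=
  i + 1 < n ∧ ∀ j, j + 1 < n → j ≠ i →
    ¬((mid P j).1 = (mid P i).1 ∧ (mid P j).2 ≤ (mid P i).2)

/-- A path in ℤ²: injective positions, consecutive positions at L¹-distance 1. -/
def IsPathPos (n : ℕ) (P : ℕ → ℤ × ℤ) : Prop :=
  (∀ a < n, ∀ b < n, P a = P b → a = b) ∧
  (∀ k, k + 1 < n → |(P (k + 1)).1 - (P k).1| + |(P (k + 1)).2 - (P k).2| = 1)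

/-!
Distinct glues of a path have distinct midpoints, since a midpoint determines its unit edge.
Hence on any vertical line the lowest glue is visible, while two visible glues on one line would
each lie strictly below the other. The line `x = a + 1/2` carries a glue by the discrete
intermediate value theorem, because the path runs from column `minx` to column `maxx`; visible
glues on distinct lines are distinct, which gives the count.
-/

lemma Nat.exists_map_le_lt_map_succ {α : Type*} [LinearOrder α] (f : ℕ → α) {a : α}
    (h0 : f 0 ≤ a) : ∀ {m : ℕ}, a < f m → ∃ k < m, f k ≤ a ∧ a < f (k + 1)
  | 0, hm => absurd h0 hm.not_ge
  | m + 1, hm => by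
    by_cases h : a < f m
    · obtain ⟨k, hk, hfk⟩ := Nat.exists_map_le_lt_map_succ f h0 h
      exact ⟨k, by omega, hfk⟩
    · exact ⟨m, by omega, not_lt.mp h, hm⟩

lemma eq_and_eq_or_eq_and_eq_of_add_eq {p q r s : ℤ × ℤ}
    (hpq : |q.1 - p.1| + |q.2 - p.2| = 1) (hrs : |s.1 - r.1| + |s.2 - r.2| = 1)
    (h : p + q = r + s) : (p = r ∧ q = s) ∨ (p = s ∧ q = r) := by
  obtain ⟨h1, h2⟩ := Prod.ext_iff.mp h
  simp only [Prod.fst_add, Prod.snd_add] at h1 h2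
  simp only [Prod.ext_iff]
  rcases abs_cases (q.1 - p.1) with ⟨_, _⟩ | ⟨_, _⟩ <;>
    rcases abs_cases (q.2 - p.2) with ⟨_, _⟩ | ⟨_, _⟩ <;>
    rcases abs_cases (s.1 - r.1) with ⟨_, _⟩ | ⟨_, _⟩ <;>
    rcases abs_cases (s.2 - r.2) with ⟨_, _⟩ | ⟨_, _⟩ <;> omega

lemma mid_eq_mid_iff (P : ℕ → ℤ × ℤ) (j k : ℕ) :
    mid P j = mid P k ↔ P j + P (j + 1) = P k + P (k + 1) := by
  simp only [mid, Prod.ext_iff, Prod.fst_add, Prod.snd_add]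
  constructor
  · rintro ⟨h1, h2⟩
    exact ⟨by exact_mod_cast (div_left_inj' two_ne_zero).mp h1,
      by exact_mod_cast (div_left_inj' two_ne_zero).mp h2⟩
  · rintro ⟨h1, h2⟩
    rw [h1, h2]
    exact ⟨rfl, rfl⟩

lemma mid_fst_eq_add_half_iff (P : ℕ → ℤ × ℤ) (i : ℕ) (a : ℤ) :
    (mid P i).1 = a + 1 / 2 ↔ (P i).1 + (P (i + 1)).1 = 2 * a + 1 := by
  rw [mid, ← Int.cast_inj (α := ℝ)]
  push_cast
  constructor <;> intro h <;> linarith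

lemma Visible.eq_of_mid_fst_eq {n : ℕ} {P : ℕ → ℤ × ℤ} {i j : ℕ} (hi : Visible n P i)
    (hj : Visible n P j) (h : (mid P i).1 = (mid P j).1) : i = j := by
  by_contra hij
  rcases le_total (mid P i).2 (mid P j).2 with hle | hle
  · exact hj.2 i hi.1 hij ⟨h, hle⟩
  · exact hi.2 j hj.1 (Ne.symm hij) ⟨h.symm, hle⟩

lemma ncard_Ico_le_ncard_visible {n : ℕ} {P : ℕ → ℤ × ℤ} {lo hi : ℤ}
    (h : ∀ a, lo ≤ a → a < hi → ∃ i, Visible n P i ∧ (mid P i).1 = a + 1 / 2) :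
    (Set.Ico lo hi).ncard ≤ {i | Visible n P i}.ncard := by
  have hfin : {i | Visible n P i}.Finite :=
    (Set.finite_Iio n).subset fun i hvis => Nat.lt_of_succ_lt hvis.1
  have hsub : Set.Ico lo hi ⊆ (fun i => ⌊(mid P i).1⌋) '' {i | Visible n P i} := by
    intro a ⟨hlo, hhi⟩
    obtain ⟨i, hvis, hix⟩ := h a hlo hhi
    refine ⟨i, hvis, ?_⟩
    change ⌊(mid P i).1⌋ = a
    rw [hix, Int.floor_intCast_add]
    norm_num
  exact (Set.ncard_le_ncard hsub (hfin.image _)).trans (Set.ncard_image_le hfin)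

namespace IsPathPos

variable {n : ℕ} {P : ℕ → ℤ × ℤ}

lemma mid_injOn (hP : IsPathPos n P) {j k : ℕ} (hj : j + 1 < n) (hk : k + 1 < n)
    (h : mid P j = mid P k) : j = k := by
  rcases eq_and_eq_or_eq_and_eq_of_add_eq (hP.2 j hj) (hP.2 k hk) ((mid_eq_mid_iff P j k).mp h)
    with ⟨h, -⟩ | ⟨h₁, h₂⟩
  · exact hP.1 j (by omega) k (by omega) h
  · have := hP.1 j (by omega) (k + 1) hk h₁
    have := hP.1 (j + 1) hj k (by omega) h₂
    omega

lemma exists_visible_of_mid_fst_eq (hP : IsPathPos n P) {k : ℕ} (hk : k + 1 < n) :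
    ∃ i, Visible n P i ∧ (mid P i).1 = (mid P k).1 := by
  classical
  set S := (Finset.range (n - 1)).filter fun j => (mid P j).1 = (mid P k).1
  obtain ⟨i, hiS, hmin⟩ := S.exists_min_image (fun j => (mid P j).2)
    ⟨k, Finset.mem_filter.mpr ⟨Finset.mem_range.mpr (by omega), rfl⟩⟩
  obtain ⟨hi, hix⟩ := Finset.mem_filter.mp hiS
  rw [Finset.mem_range] at hi
  refine ⟨i, ⟨by omega, fun j hj hji ⟨hjx, hjy⟩ => hji (hP.mid_injOn hj (by omega) ?_)⟩, hix⟩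
  have hij := hmin j (Finset.mem_filter.mpr ⟨Finset.mem_range.mpr (by omega), hjx.trans hix⟩)
  exact Prod.ext hjx (le_antisymm hjy hij)

lemma exists_mid_fst_eq_add_half (hP : IsPathPos n P) {a : ℤ} (h0 : (P 0).1 ≤ a)
    (hlast : a < (P (n - 1)).1) : ∃ k, k + 1 < n ∧ (mid P k).1 = a + 1 / 2 := by
  obtain ⟨k, hk, hfk, hfk'⟩ := Nat.exists_map_le_lt_map_succ (fun k => (P k).1) h0 hlast
  have hstep := hP.2 k (by omega)
  have := abs_nonneg ((P (k + 1)).2 - (P k).2)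
  refine ⟨k, by omega, (mid_fst_eq_add_half_iff P k a).mpr ?_⟩
  rcases abs_cases ((P (k + 1)).1 - (P k).1) with ⟨_, _⟩ | ⟨_, _⟩ <;> omega

end IsPathPos

theorem wide_path_has_visible_glues_general (n W : ℕ) (P : ℕ → ℤ × ℤ) (minx maxx : ℤ)
    (hP : IsPathPos n P)
    (hstart : (P 0).1 = minx) (hend : (P (n - 1)).1 = maxx)
    (hW : (W : ℤ) ≤ maxx - minx) :
    (∀ a : ℤ, minx ≤ a → a < maxx →
      ∃! i, Visible n P i ∧ (mid P i).1 = (a : ℝ) + 1 / 2) ∧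
    W ≤ {i | Visible n P i}.ncard := by
  have hglue : ∀ a : ℤ, minx ≤ a → a < maxx →
      ∃! i, Visible n P i ∧ (mid P i).1 = (a : ℝ) + 1 / 2 := by
    intro a hlo hhi
    obtain ⟨k, hk, hkx⟩ := hP.exists_mid_fst_eq_add_half (hstart ▸ hlo) (hend ▸ hhi)
    obtain ⟨i, hi, hix⟩ := hP.exists_visible_of_mid_fst_eq hk
    refine ⟨i, ⟨hi, hix.trans hkx⟩, fun j hj => hj.1.eq_of_mid_fst_eq hi ?_⟩
    rw [hj.2, hix, hkx]
  refine ⟨hglue, ?_⟩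
  have hcount := ncard_Ico_le_ncard_visible fun a hlo hhi => (hglue a hlo hhi).exists
  rw [Set.ncard_eq_toFinset_card', Set.toFinset_Ico, Int.card_Ico] at hcount
  omega

/-- A path of horizontal extent at least `W`, starting at its leftmost column and
ending at its rightmost column, has at least `W` visible glues: every half-integer
x-coordinate strictly between the leftmost and rightmost columns carries exactly one
glue of `P` visible from the south. -/
theorem wide_path_has_visible_glues (n W : ℕ) (P : ℕ → ℤ × ℤ) (minx maxx : ℤ)
    (hn : 2 ≤ n) (hP : IsPathPos n P)
    (hrange : ∀ k < n, minx ≤ (P k).1 ∧ (P k).1 ≤ maxx)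
    (hstart : (P 0).1 = minx) (hend : (P (n - 1)).1 = maxx)
    (hW : (W : ℤ) ≤ maxx - minx) :
    (∀ a : ℤ, minx ≤ a → a < maxx →
      ∃! i, Visible n P i ∧ (mid P i).1 = (a : ℝ) + 1 / 2) ∧
    W ≤ {i | Visible n P i}.ncard :=
  wide_path_has_visible_glues_general n W P minx maxx hP hstart hend hW
end

section
/- Let P be a finite path in ℤ² and q its pumping between indices i < j with v = pos(P_j) − pos(P_i) ≠ (0,0). Suppose q is not injective on positions, i.e., there exist indices a < b with pos(q_a) = pos(q_b). Then there exist indices a′ ≤ j and b′ > a′ with pos(q_{a′}) = pos(q_{b′}); that is, the first self-intersection of the pumped sequence can be taken to involve an index at most j. -/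
/-- The pumping (on positions) of `P : ℕ → ℤ × ℤ` between indices `i` and `j`. -/
def pumpPos (P : ℕ → ℤ × ℤ) (i j : ℕ) (k : ℕ) : ℤ × ℤ :=
  if k ≤ i then P k
  else P (i + 1 + ((k - i - 1) % (j - i))) +
    (((k - i - 1) / (j - i) : ℕ) • (P j - P i))

lemma pumpPos_shift (P : ℕ → ℤ × ℤ) (i j k : ℕ) (hij : i < j) (hk : j < k) :
    pumpPos P i j (k - (j - i)) = pumpPos P i j k - (P j - P i) := by
  have hd : 0 < j - i := by omega
  have h1 : ¬ (k - (j - i) ≤ i) := by omega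
  have h2 : ¬ (k ≤ i) := by omega
  simp only [pumpPos, if_neg h1, if_neg h2]
  have hm : (j - i) ≤ k - i - 1 := by omega
  have e1 : k - (j - i) - i - 1 = (k - i - 1) - (j - i) := by omega
  rw [e1, ← Nat.mod_eq_sub_mod hm, Nat.div_eq_sub_div hd hm, succ_nsmul]
  abel

/-- If the pumping of a finite path `P` between `i < j` (with `v = P j - P i ≠ 0`)
is not injective on positions, then there is a coincidence of positions whose
smaller index is at most `j`: the first self-intersection of the pumped sequence can
be taken to involve an index at most `j`. -/
theorem pump_first_self_intersection (n : ℕ) (P : ℕ → ℤ × ℤ) (i j : ℕ)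
    (hij : i < j) (hjn : j < n)
    (hinj : ∀ a < n, ∀ b < n, P a = P b → a = b)
    (hadj : ∀ k, k + 1 < n →
      |(P (k + 1)).1 - (P k).1| + |(P (k + 1)).2 - (P k).2| = 1)
    (hv : P j - P i ≠ 0)
    (hcross : ∃ a b, a < b ∧ pumpPos P i j a = pumpPos P i j b) :
    ∃ a b, a ≤ j ∧ a < b ∧ pumpPos P i j a = pumpPos P i j b := by
  obtain ⟨a, b, hab, heq⟩ := hcross
  induction a using Nat.strong_induction_on generalizing b with
  | _ a ih =>
    by_cases h : a ≤ j
    · exact ⟨a, b, h, hab, heq⟩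
    · push_neg at h
      refine ih (a - (j - i)) (by omega) (b - (j - i)) (by omega) ?_
      rw [pumpPos_shift P i j a hij h, pumpPos_shift P i j b hij (h.trans hab), heq]
end
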